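/- Let Y be a nonnegative random variable with 0 < E[Y] < ∞, let Ẏ be its Y-size-biased transform, and let U be uniform on [0,1] independent of Ẏ. If U·Ẏ has the same distribution as Y, then Y is exponentially distributed. -/

import Mathlib

/-!
Let `μ` be the law of `Y`, `a = E[Y]` and `Ḡ(t) = μ(t, ∞)`. Conditioning on `Ẏ = y`,
`P(U y > t) = (y - t)⁺ / y`, and the factor `y` cancels against the size-bias density, so
`Ḡ(t) = P(U Ẏ > t) = E[(Y - t)⁺] / a = (1 / a) ∫_t^∞ Ḡ(s) ds` for `t ≥ 0`.
Hence `Ḡ` is continuous and solves `a Ḡ' = -Ḡ` on `[0, ∞)`, so `Ḡ(t) = Ḡ(0) e^{-t/a}`, and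
`Ḡ(0) = E[Y] / a = 1`.
-/

open MeasureTheory ProbabilityTheory

/-- The law of the `Y`-size-biased transform of a random variable with law `μ`
and mean `a`: `dν(y) = y dμ(y) / a`. -/
noncomputable def sizeBiasedLaw (μ : Measure ℝ) (a : ℝ) : Measure ℝ :=
  (ENNReal.ofReal a)⁻¹ • μ.withDensity (fun y => ENNReal.ofReal y)

open Set Real

theorem lintegral_ofReal_sub_eq_setLIntegral_Ioi (μ : Measure ℝ) (t : ℝ) :
    ∫⁻ y, ENNReal.ofReal (y - t) ∂μ = ∫⁻ s in Ioi t, μ (Ioi s) := by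
  have hpos : ∀ y, ENNReal.ofReal (y - t) = ENNReal.ofReal (max (y - t) 0) := by simp
  have hshift : ∫⁻ s in Ioi 0, μ (Ioi (t + s)) = ∫⁻ s in Ioi t, μ (Ioi s) := by
    simpa only [preimage_const_add_Ioi, sub_self] using
      (measurePreserving_add_left volume t).setLIntegral_comp_preimage_emb
        (measurableEmbedding_addLeft t) (fun s => μ (Ioi s)) (Ioi t)
  rw [lintegral_congr hpos, lintegral_eq_lintegral_meas_lt (f := fun y => max (y - t) 0) μ
      (ae_of_all _ fun y => le_max_right _ _)
      ((measurable_id.sub_const t).max measurable_const).aemeasurable, ← hshift]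
  refine setLIntegral_congr_fun measurableSet_Ioi fun s (hs : 0 < s) => congr_arg μ ?_
  ext y
  simp [hs.not_gt, sub_eq_add_neg, add_comm]

theorem ofReal_mul_volume_Icc_setOf_lt_mul {t : ℝ} (ht : 0 ≤ t) (y : ℝ) :
    ENNReal.ofReal y * volume.restrict (Icc 0 1) {u | t < u * y} = ENNReal.ofReal (y - t) := by
  rcases le_or_gt y 0 with hy | hy
  · rw [ENNReal.ofReal_of_nonpos hy, ENNReal.ofReal_of_nonpos (by linarith), zero_mul]
  have hset : {u : ℝ | t < u * y} = Ioi (t / y) := by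
    ext u; simp [div_lt_iff₀ hy]
  rw [hset, Measure.restrict_apply measurableSet_Ioi, ← Ici_inter_Iic, ← inter_assoc,
    inter_eq_left.2 (Ioi_subset_Ici (by positivity)), Ioi_inter_Iic, Real.volume_Ioc,
    ← ENNReal.ofReal_mul hy.le]
  congr 1
  field_simp

theorem eq_mul_exp_of_mul_eq_setIntegral_Ioi {G : ℝ → ℝ} {a : ℝ} (ha : a ≠ 0)
    (hG : IntegrableOn G (Ioi 0)) (h : ∀ t, 0 ≤ t → a * G t = ∫ s in Ioi t, G s)
    {t : ℝ} (ht : 0 ≤ t) : G t = G 0 * exp (-t / a) := by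
  rcases ht.eq_or_lt with rfl | ht
  · simp
  set F : ℝ → ℝ := fun u => ∫ s in (0:ℝ)..u, G s
  have hGF : ∀ u ∈ Icc 0 t, a * G u = a * G 0 - F u := fun u hu => by
    rw [h u hu.1, h 0 le_rfl, ← sub_sub_cancel (∫ s in Ioi 0, G s) (∫ s in Ioi u, G s),
      intervalIntegral.integral_Ioi_sub_Ioi hG hu.1]
  have hFc : ContinuousOn F (Icc 0 t) := by
    have hint : IntervalIntegrable G volume 0 t :=
      (intervalIntegrable_iff_integrableOn_Ioc_of_le ht.le).2 (hG.mono_set Ioc_subset_Ioi_self)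
    simpa [uIcc_of_le ht.le] using
      intervalIntegral.continuousOn_primitive_interval' hint left_mem_uIcc
  have hGc : ContinuousOn G (Icc 0 t) :=
    (((continuousOn_const (c := a * G 0)).sub hFc).div_const a).congr fun u hu => by
      simp only [Pi.sub_apply, ← hGF u hu, mul_div_cancel_left₀ _ ha]
  -- `f u = a G u e^{u/a}` on `[0, t]`, constant since `a G' = -G`
  set f := fun u => (a * G 0 - F u) * exp (u / a)
  have hf' : ∀ u ∈ Ioo 0 t, HasDerivAt f 0 u := fun u hu => by
    have hFu : HasDerivAt F (G u) u :=
      intervalIntegral.integral_hasDerivAt_right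
        ((intervalIntegrable_iff_integrableOn_Ioc_of_le hu.1.le).2
          (hG.mono_set Ioc_subset_Ioi_self))
        ((hGc.mono Ioo_subset_Icc_self).stronglyMeasurableAtFilter isOpen_Ioo u hu)
        ((hGc.mono Ioo_subset_Icc_self).continuousAt (isOpen_Ioo.mem_nhds hu))
    refine ((hFu.const_sub (a * G 0)).mul ((hasDerivAt_id u).div_const a).exp).congr_deriv ?_
    rw [← hGF u (Ioo_subset_Icc_self hu)]
    field_simp
    ring
  obtain ⟨c, -, hc⟩ := exists_hasDerivAt_eq_slope f (fun _ => 0) ht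
    ((continuousOn_const.sub hFc).mul
      (continuous_exp.comp (continuous_id.div_const a)).continuousOn) hf'
  have hft : f t = f 0 := by
    rw [eq_comm, div_eq_zero_iff, sub_eq_zero] at hc
    exact hc.resolve_right (by linarith)
  simp only [f, ← hGF t ⟨ht.le, le_rfl⟩, F, intervalIntegral.integral_same, sub_zero,
    zero_div, exp_zero, mul_one] at hft
  rw [neg_div, exp_neg, eq_mul_inv_iff_mul_eq₀ (exp_ne_zero _)]
  exact mul_left_cancel₀ ha (by linear_combination hft)

theorem uniform_mconv_sizeBiasedLaw_Ioi (μ : Measure ℝ) [SFinite μ] (a : ℝ) {t : ℝ}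
    (ht : 0 ≤ t) :
    (volume.restrict (Icc 0 1) ∗ₘ sizeBiasedLaw μ a) (Ioi t)
      = (ENNReal.ofReal a)⁻¹ * ∫⁻ s in Ioi t, μ (Ioi s) := by
  have : SFinite (sizeBiasedLaw μ a) := by unfold sizeBiasedLaw; infer_instance
  rw [Measure.mconv, Measure.map_apply measurable_mul measurableSet_Ioi,
    Measure.prod_apply_symm (measurable_mul measurableSet_Ioi), sizeBiasedLaw,
    lintegral_smul_measure, lintegral_withDensity_eq_lintegral_mul_non_measurable _
      ENNReal.measurable_ofReal (ae_of_all _ fun _ => ENNReal.ofReal_lt_top),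
    ← lintegral_ofReal_sub_eq_setLIntegral_Ioi]
  congr 1
  exact lintegral_congr fun y => ofReal_mul_volume_Icc_setOf_lt_mul ht y

theorem measureReal_Ioi_eq_mul_exp (μ : Measure ℝ) [IsFiniteMeasure μ] {a : ℝ} (ha : 0 < a)
    (h : ∀ t, 0 ≤ t → ENNReal.ofReal a * μ (Ioi t) = ∫⁻ s in Ioi t, μ (Ioi s))
    {t : ℝ} (ht : 0 ≤ t) : μ.real (Ioi t) = μ.real (Ioi 0) * exp (-t / a) := by
  have hm : Measurable fun s => μ (Ioi s) :=
    Antitone.measurable fun _ _ hxy => measure_mono (Ioi_subset_Ioi hxy)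
  refine eq_mul_exp_of_mul_eq_setIntegral_Ioi (G := fun s => μ.real (Ioi s)) ha.ne' ?_
    (fun u hu => ?_) ht
  · refine integrable_toReal_of_lintegral_ne_top hm.aemeasurable ?_
    rw [← h 0 le_rfl]
    exact ENNReal.mul_ne_top ENNReal.ofReal_ne_top (measure_ne_top _ _)
  · simp only [measureReal_def]
    rw [integral_toReal hm.aemeasurable (ae_of_all _ fun _ => measure_lt_top _ _), ← h u hu,
      ENNReal.toReal_mul, ENNReal.toReal_ofReal ha.le]

theorem eq_expMeasure_of_measureReal_Ioi (μ : Measure ℝ) [IsProbabilityMeasure μ] {r : ℝ}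
    (hr : 0 < r) (h : ∀ t, 0 ≤ t → μ.real (Ioi t) = exp (-(r * t))) : μ = expMeasure r := by
  have := isProbabilityMeasure_expMeasure hr
  rw [← Measure.cdf_eq_iff]
  ext x
  rw [cdf_expMeasure_eq hr, cdf_eq_real, ← compl_Ioi, measureReal_compl measurableSet_Ioi,
    probReal_univ]
  split_ifs with hx
  · rw [h x hx]
  · have h0 : μ.real (Ioi 0) = 1 := by simpa using h 0 le_rfl
    have hle : μ.real (Ioi 0) ≤ μ.real (Ioi x) := measureReal_mono (Ioi_subset_Ioi (by linarith))
    linarith [measureReal_le_one (μ := μ) (s := Ioi x)]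

theorem stmt_16 {Ω : Type*} [MeasureSpace Ω] (P : Measure Ω) [IsProbabilityMeasure P]
    (Y Ydot U : Ω → ℝ) (hY : Measurable Y) (hYdot : Measurable Ydot) (hU : Measurable U)
    (hY_nonneg : ∀ ω, 0 ≤ Y ω) (hY_int : Integrable Y P) (hY_pos : 0 < ∫ ω, Y ω ∂P)
    (hYdot_law : P.map Ydot = sizeBiasedLaw (P.map Y) (∫ ω, Y ω ∂P))
    (hU_law : P.map U = volume.restrict (Set.Icc (0:ℝ) 1))
    (h_indep : IndepFun U Ydot P)
    (h_eq : P.map (fun ω => U ω * Ydot ω) = P.map Y) :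
    ∃ r : ℝ, 0 < r ∧ P.map Y = expMeasure r := by
  set μ := P.map Y
  set a := ∫ ω, Y ω ∂P
  have : IsProbabilityMeasure μ := Measure.isProbabilityMeasure_map hY.aemeasurable
  have hlaw : μ = volume.restrict (Icc 0 1) ∗ₘ sizeBiasedLaw μ a := by
    rw [← hU_law, ← hYdot_law, ← h_indep.map_mul_eq_map_mconv_map hU hYdot]
    exact h_eq.symm
  have ha : ENNReal.ofReal a ≠ 0 := (ENNReal.ofReal_pos.2 hY_pos).ne'
  have hfix : ∀ t, 0 ≤ t → ENNReal.ofReal a * μ (Ioi t) = ∫⁻ s in Ioi t, μ (Ioi s) :=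
    fun t ht => calc
      ENNReal.ofReal a * μ (Ioi t)
          = ENNReal.ofReal a * (volume.restrict (Icc 0 1) ∗ₘ sizeBiasedLaw μ a) (Ioi t) := by
        rw [← hlaw]
      _ = ∫⁻ s in Ioi t, μ (Ioi s) := by
        rw [uniform_mconv_sizeBiasedLaw_Ioi μ a ht,
          ENNReal.mul_inv_cancel_left ha ENNReal.ofReal_ne_top]
  have hmean : ∫⁻ s in Ioi 0, μ (Ioi s) = ENNReal.ofReal a := by
    rw [← lintegral_ofReal_sub_eq_setLIntegral_Ioi]
    simp only [sub_zero]
    rw [lintegral_map ENNReal.measurable_ofReal hY,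
      ofReal_integral_eq_lintegral_ofReal hY_int (ae_of_all _ hY_nonneg)]
  have h0 : μ (Ioi 0) = 1 :=
    (ENNReal.mul_eq_left ha ENNReal.ofReal_ne_top).1 (by rw [hfix 0 le_rfl, hmean])
  refine ⟨a⁻¹, inv_pos.2 hY_pos, eq_expMeasure_of_measureReal_Ioi μ (inv_pos.2 hY_pos) ?_⟩
  intro t ht
  rw [measureReal_Ioi_eq_mul_exp μ hY_pos hfix ht, measureReal_def, h0, ENNReal.toReal_one,
    one_mul, neg_div, div_eq_inv_mul]
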